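/- Let u = x_1^{a_1}⋯x_n^{a_n} ∈ Mon(S∖I). Then for every minimal monomial generator v = x_1^{c_1}⋯x_n^{c_n} of I there exists an index i with c_i > a_i, so that the variable x_{i,a_i+1} divides the polarization v^℘. Consequently I^℘ ⊆ (x_{1,a_1+1}, …, x_{n,a_n+1}), and the prime ideal (x_{1,a_1+1}, …, x_{n,a_n+1}) is a minimal prime ideal of I^℘. -/

import Mathlib

/-!
Two facts about exponent vectors carry the proof. Since `x^a ∉ I`, every monomial of `I`
exceeds `a` in some coordinate `i`, so its polarization contains `x_{i,a_i+1}`; this puts `I^℘`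
inside `φ(x^a)`. Conversely, a minimal generator dividing `x^a x_i^{b_i}` exceeds `a` only at
`i`, so its polarization meets `φ(x^a)` only in `x_{i,a_i+1}`; hence every prime between `I^℘`
and `φ(x^a)` contains all the variables of `φ(x^a)`.
-/

open MvPolynomial

noncomputable section

/-- The vertex set / variable set `𝒮` of the polarized ring `S^℘`: pairs `⟨i, j⟩` with
`1 ≤ i ≤ n`, `1 ≤ j ≤ b i`.  Here `j : Fin (b i)` encodes the paper's second index `j + 1`,
so the vertex `⟨i, j⟩` stands for the variable `x_{i, j+1}` of the paper. -/
abbrev PolVars (m : ℕ) (b : Fin m → ℕ) := Σ i : Fin m, Fin (b i)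

/-- `I` is a monomial ideal, i.e. generated by monomials. -/
def IsMonomialIdeal {K : Type} [Field K] {m : ℕ} (I : Ideal (MvPolynomial (Fin m) K)) : Prop :=
  ∃ A : Set (Fin m →₀ ℕ), I = Ideal.span ((fun c => (monomial c (1 : K))) '' A)

/-- The exponent vectors of the minimal monomial generators of a monomial ideal:
the exponent vectors of monomials of `I` that are minimal under divisibility. -/
def MinGens (K : Type) [Field K] {m : ℕ} (I : Ideal (MvPolynomial (Fin m) K)) :
    Set (Fin m →₀ ℕ) :=
  {c | (monomial c (1 : K)) ∈ I ∧ ∀ c' : Fin m →₀ ℕ, c' ≤ c → c' ≠ c →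
      (monomial c' (1 : K)) ∉ I}

/-- The polarization `v^℘ = ∏_{i=1}^n ∏_{j=1}^{c_i} x_{i,j}` of the monomial `v = x^c`. -/
def polMon (K : Type) [Field K] {m : ℕ} (b : Fin m → ℕ) (c : Fin m →₀ ℕ) :
    MvPolynomial (PolVars m b) K :=
  ∏ v ∈ Finset.univ.filter (fun v : PolVars m b => (v.2 : ℕ) < c v.1), X v

/-- The polarization `I^℘ ⊆ S^℘` of the monomial ideal `I`, generated by the
polarizations of the minimal monomial generators of `I`. -/
def polarIdeal (K : Type) [Field K] {m : ℕ} (b : Fin m → ℕ)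
    (I : Ideal (MvPolynomial (Fin m) K)) : Ideal (MvPolynomial (PolVars m b) K) :=
  Ideal.span (polMon K b '' MinGens K I)

/-- The squarefree monomial `x_{1,a_1+1} ⋯ x_{n,a_n+1} ∈ S^℘` associated with the
exponent vector `a` of a monomial `x^a ∈ Mon(S∖I)`. -/
def genL (K : Type) [Field K] {m : ℕ} (b : Fin m → ℕ) (a : Fin m →₀ ℕ) :
    MvPolynomial (PolVars m b) K :=
  ∏ v ∈ Finset.univ.filter (fun v : PolVars m b => (v.2 : ℕ) = a v.1), X v

/-- The ideal `L(I) ⊆ S^℘`, generated by the monomials `x_{1,a_1+1} ⋯ x_{n,a_n+1}`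
with `x^a ∈ Mon(S∖I)`. -/
def LIdeal (K : Type) [Field K] {m : ℕ} (b : Fin m → ℕ)
    (I : Ideal (MvPolynomial (Fin m) K)) : Ideal (MvPolynomial (PolVars m b) K) :=
  Ideal.span (genL K b '' {a | (monomial a (1 : K)) ∉ I})

/-- The monomial prime ideal `φ(x^a) = (x_{1,a_1+1}, …, x_{n,a_n+1}) ⊆ S^℘`. -/
def phiIdeal (K : Type) [Field K] {m : ℕ} (b : Fin m → ℕ) (a : Fin m →₀ ℕ) :
    Ideal (MvPolynomial (PolVars m b) K) :=
  Ideal.span ((fun v => (X v : MvPolynomial (PolVars m b) K)) ''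
    {v : PolVars m b | (v.2 : ℕ) = a v.1})

/-- The set of faces of the simplicial complex `Δ(I)` on the vertex set `𝒮`, whose
Stanley–Reisner ideal is `I^℘`: a finite set `F` of vertices is a face iff the
squarefree monomial `∏_{v ∈ F} v` does not belong to `I^℘`. -/
def facesDelta (K : Type) [Field K] {m : ℕ} (b : Fin m → ℕ)
    (I : Ideal (MvPolynomial (Fin m) K)) : Set (Finset (PolVars m b)) :=
  {F | (∏ v ∈ F, (X v : MvPolynomial (PolVars m b) K)) ∉ polarIdeal K b I}

/-- `F` is a facet (maximal face) of the simplicial complex (set of faces) `Δ`. -/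
def IsFacetOf {V : Type} (Δ : Set (Finset V)) (F : Finset V) : Prop :=
  F ∈ Δ ∧ ∀ G ∈ Δ, F ⊆ G → F = G

/-- Zero-dimensionality data for a monomial ideal: `I` is a proper monomial ideal and,
for each `i`, `b i ≥ 1` is the smallest positive integer with `x_i^{b i} ∈ I`
(equivalently, `dim S/I = 0` with the `b i` minimal). -/
def ZeroDimData (K : Type) [Field K] {m : ℕ} (b : Fin m → ℕ)
    (I : Ideal (MvPolynomial (Fin m) K)) : Prop :=
  IsMonomialIdeal I ∧ I ≠ ⊤ ∧ ∀ i : Fin m, 1 ≤ b i ∧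
    (monomial (Finsupp.single i (b i)) (1 : K)) ∈ I ∧
    ∀ j : ℕ, j < b i → (monomial (Finsupp.single i j) (1 : K)) ∉ I

/-- The deletion `del_Δ(v) = {G ∈ Δ : v ∉ G}`. -/
def delC {V : Type} (Δ : Set (Finset V)) (v : V) : Set (Finset V) :=
  {G ∈ Δ | v ∉ G}

/-- The link `link_Δ(v) = {G ∈ Δ : v ∉ G and G ∪ {v} ∈ Δ}`. -/
def linkC {V : Type} [DecidableEq V] (Δ : Set (Finset V)) (v : V) : Set (Finset V) :=
  {G ∈ Δ | v ∉ G ∧ insert v G ∈ Δ}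

/-- Vertex decomposability of a simplicial complex (given as its set of faces):
`Δ` is vertex decomposable if it is a simplex, or it contains a vertex `v` such that
(i) every facet of `del_Δ(v)` is a facet of `Δ` (`v` is a shedding vertex), and
(ii) both `del_Δ(v)` and `link_Δ(v)` are vertex decomposable. -/
inductive IsVertexDecomposable {V : Type} [DecidableEq V] : Set (Finset V) → Prop
  | simplex (F : Finset V) : IsVertexDecomposable {G | G ⊆ F}
  | shed (Δ : Set (Finset V)) (v : V) (hv : {v} ∈ Δ)
      (hshed : ∀ F : Finset V, IsFacetOf (delC Δ v) F → IsFacetOf Δ F)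
      (hdel : IsVertexDecomposable (delC Δ v))
      (hlink : IsVertexDecomposable (linkC Δ v)) : IsVertexDecomposable Δ

/-- The vertex map replacing `x_{i₀,j}` by `x_{i₀,j-1}` and fixing all other vertices. -/
def shiftDown {m : ℕ} {b : Fin m → ℕ} (i₀ : Fin m) (v : PolVars m b) : PolVars m b :=
  ⟨v.1, ⟨(v.2 : ℕ) - (if v.1 = i₀ then 1 else 0),
    Nat.lt_of_le_of_lt (Nat.sub_le _ _) v.2.isLt⟩⟩

/-- `set(u)` for a generator `u = genL a` of `L(I)` with respect to the order `r`:
the set of variables `x` of `S^℘` such that `x·u` lies in the ideal generated by the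
generators of `L(I)` preceding `u`. -/
def setOfGen (K : Type) [Field K] {m : ℕ} (b : Fin m → ℕ)
    (I : Ideal (MvPolynomial (Fin m) K))
    (r : (Fin m →₀ ℕ) → (Fin m →₀ ℕ) → Prop) (a : Fin m →₀ ℕ) : Set (PolVars m b) :=
  {v | ∃ a' : Fin m →₀ ℕ, (monomial a' (1 : K)) ∉ I ∧ r a' a ∧ a' ≠ a ∧
      genL K b a' ∣ X v * genL K b a}

/-- `J(u,i)`: the weakly increasing sequence of the second indices of the variables
`x_{i,·}` dividing the monomial with exponent vector `e` (counted with multiplicity). -/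
def rowList {m : ℕ} {b : Fin m → ℕ} (e : PolVars m b →₀ ℕ) (i : Fin m) : List ℕ :=
  Multiset.sort (∑ j : Fin (b i), Multiset.replicate (e ⟨i, j⟩) (j : ℕ)) (· ≤ ·)

/-- Lexicographic (weak) order on sequences of natural numbers. -/
def lexLE (l l' : List ℕ) : Prop := l = l' ∨ List.Lex (· < ·) l l'

/-- The exponent vectors of the (minimal) monomial generators of `L(I)^k`:
products of `k` generators of `L(I)`. -/
def GLkE (K : Type) [Field K] {m : ℕ} (b : Fin m → ℕ)
    (I : Ideal (MvPolynomial (Fin m) K)) (k : ℕ) : Set (PolVars m b →₀ ℕ) :=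
  {e | ∃ f : Fin k → (Fin m →₀ ℕ), (∀ j, (monomial (f j) (1 : K)) ∉ I) ∧
      (monomial e (1 : K) : MvPolynomial (PolVars m b) K) = ∏ j, genL K b (f j)}

/-- The depth of a module `M` with respect to the ideal `J`: the maximal length of an
`M`-regular sequence consisting of elements of `J`. -/
def myDepth (R : Type) [CommRing R] (J : Ideal R) (M : Type) [AddCommGroup M]
    [Module R M] : ℕ :=
  sSup {k : ℕ | ∃ rs : List R, rs.length = k ∧ (∀ r ∈ rs, r ∈ J) ∧
      RingTheory.Sequence.IsRegular M rs}

/-- `max{deg lcm(u_1, …, u_k) : u_1, …, u_k ∈ Mon(S∖I)}`; the degree of the lcm of the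
monomials `x^{f 1}, …, x^{f k}` is `∑_i max_j (f j) i`. -/
def maxLcmDeg (K : Type) [Field K] {m : ℕ} (I : Ideal (MvPolynomial (Fin m) K))
    (k : ℕ) : ℕ :=
  sSup {d : ℕ | ∃ f : Fin k → (Fin m →₀ ℕ), (∀ j, (monomial (f j) (1 : K)) ∉ I) ∧
      d = ∑ i : Fin m, Finset.univ.sup (fun j => (f j) i)}

namespace MvPolynomial

variable {σ R : Type*}

theorem monomial_one_mem_of_le [CommSemiring R] {I : Ideal (MvPolynomial σ R)}
    {c d : σ →₀ ℕ} (hcd : c ≤ d) (hc : monomial c (1 : R) ∈ I) : monomial d (1 : R) ∈ I :=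
  I.mem_of_dvd (monomial_dvd_monomial.mpr ⟨Or.inr hcd, one_dvd _⟩) hc

theorem X_mem_ideal_span_X_image_iff [CommSemiring R] [Nontrivial R] {s : Set σ} {v : σ} :
    (X v : MvPolynomial σ R) ∈ Ideal.span (X '' s : Set (MvPolynomial σ R)) ↔ v ∈ s := by
  classical
  simp [mem_ideal_span_X_image, support_X, Finsupp.single_apply]

/-- The span is the kernel of the endomorphism killing the variables in `s`. -/
theorem isPrime_ideal_span_X_image [CommRing R] [IsDomain R] (s : Set σ) :
    (Ideal.span (X '' s : Set (MvPolynomial σ R))).IsPrime := by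
  classical
  set J := Ideal.span (X '' s : Set (MvPolynomial σ R))
  set kill : MvPolynomial σ R →ₐ[R] MvPolynomial σ R :=
    aeval fun v => if v ∈ s then 0 else X v
  have hkill : (Ideal.Quotient.mkₐ R J).comp kill = Ideal.Quotient.mkₐ R J := by
    refine algHom_ext fun v => ?_
    by_cases hv : v ∈ s
    · have hXv : (X v : MvPolynomial σ R) ∈ J := Ideal.subset_span ⟨v, hv, rfl⟩
      simpa [kill, hv] using (Ideal.Quotient.eq_zero_iff_mem.mpr hXv).symm
    · simp [kill, hv]
  have hker : J = RingHom.ker kill := by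
    refine le_antisymm (Ideal.span_le.mpr ?_) fun f hf => ?_
    · rintro _ ⟨v, hv, rfl⟩
      simp [kill, hv]
    · rw [← Ideal.Quotient.eq_zero_iff_mem, ← Ideal.Quotient.mkₐ_eq_mk R, ← hkill]
      simp [(RingHom.mem_ker).mp hf]
  rw [hker]
  exact RingHom.ker_isPrime _

end MvPolynomial

section Polarization

variable {K : Type} [Field K] {n : ℕ}

theorem exists_mem_minGens_le {I : Ideal (MvPolynomial (Fin n) K)} {d : Fin n →₀ ℕ}
    (hd : monomial d (1 : K) ∈ I) : ∃ c ∈ MinGens K I, c ≤ d := by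
  obtain ⟨c, ⟨hcd, hcI⟩, hmin⟩ := WellFounded.has_min wellFounded_lt
    {c : Fin n →₀ ℕ | c ≤ d ∧ monomial c (1 : K) ∈ I} ⟨d, le_rfl, hd⟩
  exact ⟨c, ⟨hcI, fun c' hle hne hc' => hmin c' ⟨hle.trans hcd, hc'⟩ (hle.lt_of_ne hne)⟩, hcd⟩

theorem exists_lt_of_monomial_notMem {I : Ideal (MvPolynomial (Fin n) K)} {a c : Fin n →₀ ℕ}
    (ha : monomial a (1 : K) ∉ I) (hc : monomial c (1 : K) ∈ I) : ∃ i, a i < c i := by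
  by_contra! h
  exact ha (monomial_one_mem_of_le (Finsupp.le_def.mpr h) hc)

theorem lt_of_monomial_notMem {I : Ideal (MvPolynomial (Fin n) K)} {a : Fin n →₀ ℕ} {i : Fin n}
    {k : ℕ} (ha : monomial a (1 : K) ∉ I) (hk : monomial (Finsupp.single i k) (1 : K) ∈ I) :
    a i < k := by
  obtain ⟨j, hj⟩ := exists_lt_of_monomial_notMem ha hk
  by_cases hji : j = i
  · simpa [hji] using hj
  · simp [Ne.symm hji] at hj

theorem X_dvd_polMon {b : Fin n → ℕ} {c : Fin n →₀ ℕ} {v : PolVars n b} (hv : (v.2 : ℕ) < c v.1) :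
    X v ∣ polMon K b c :=
  Finset.dvd_prod_of_mem _ (Finset.mem_filter.mpr ⟨Finset.mem_univ _, hv⟩)

theorem X_mem_phiIdeal_iff {b : Fin n → ℕ} {a : Fin n →₀ ℕ} {v : PolVars n b} :
    X v ∈ phiIdeal K b a ↔ (v.2 : ℕ) = a v.1 :=
  X_mem_ideal_span_X_image_iff

variable {b : Fin n → ℕ} {I : Ideal (MvPolynomial (Fin n) K)} {a : Fin n →₀ ℕ}

theorem exists_X_dvd_polMon (hb : ∀ i, monomial (Finsupp.single i (b i)) (1 : K) ∈ I)
    (ha : monomial a (1 : K) ∉ I) {c : Fin n →₀ ℕ} (hc : monomial c (1 : K) ∈ I) :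
    ∃ i : Fin n, a i < c i ∧
      ∃ v : PolVars n b, v.1 = i ∧ (v.2 : ℕ) = a i ∧ X v ∣ polMon K b c := by
  obtain ⟨i, hi⟩ := exists_lt_of_monomial_notMem ha hc
  exact ⟨i, hi, ⟨i, a i, lt_of_monomial_notMem ha (hb i)⟩, rfl, rfl, X_dvd_polMon hi⟩

theorem polarIdeal_le_phiIdeal (hb : ∀ i, monomial (Finsupp.single i (b i)) (1 : K) ∈ I)
    (ha : monomial a (1 : K) ∉ I) : polarIdeal K b I ≤ phiIdeal K b a := by
  refine Ideal.span_le.mpr ?_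
  rintro _ ⟨c, hc, rfl⟩
  obtain ⟨-, -, v, rfl, hv, hdvd⟩ := exists_X_dvd_polMon hb ha hc.1
  exact Ideal.mem_of_dvd _ hdvd (X_mem_phiIdeal_iff.mpr hv)

theorem phiIdeal_le_of_isPrime (hb : ∀ i, monomial (Finsupp.single i (b i)) (1 : K) ∈ I)
    {q : Ideal (MvPolynomial (PolVars n b) K)} (hq : q.IsPrime)
    (hpq : polarIdeal K b I ≤ q) (hqφ : q ≤ phiIdeal K b a) : phiIdeal K b a ≤ q := by
  refine Ideal.span_le.mpr ?_
  rintro _ ⟨⟨i, j⟩, hj, rfl⟩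
  obtain ⟨c, hc, hca⟩ := exists_mem_minGens_le
    (monomial_one_mem_of_le (le_add_self : Finsupp.single i (b i) ≤ a + _) (hb i))
  obtain ⟨⟨i', j'⟩, hw, hwq⟩ :=
    (Ideal.IsPrime.prod_mem_iff (hp := hq)).mp (hpq (Ideal.subset_span ⟨c, hc, rfl⟩))
  have hwc : (j' : ℕ) < c i' := (Finset.mem_filter.mp hw).2
  have hwa : (j' : ℕ) = a i' := X_mem_phiIdeal_iff.mp (hqφ hwq)
  obtain rfl : i' = i := by
    by_contra hne
    have := hca i'
    simp [Ne.symm hne] at this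
    omega
  obtain rfl : j' = j := Fin.ext (hwa.trans hj.symm)
  exact hwq

end Polarization

/-- Let `u = x^a ∈ Mon(S∖I)`. Then for every minimal monomial generator
`v = x^c` of `I` there is an index `i` with `c_i > a_i`, so that the variable `x_{i,a_i+1}`
divides the polarization `v^℘`.  Consequently `I^℘ ⊆ (x_{1,a_1+1}, …, x_{n,a_n+1})`, and
`(x_{1,a_1+1}, …, x_{n,a_n+1})` is a minimal prime ideal of `I^℘`. -/
theorem statement1 {K : Type} [Field K] {n : ℕ} (b : Fin n → ℕ)
    (I : Ideal (MvPolynomial (Fin n) K)) (hI : ZeroDimData K b I)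
    (a : Fin n →₀ ℕ) (ha : (monomial a (1 : K)) ∉ I) :
    (∀ c ∈ MinGens K I, ∃ i : Fin n, a i < c i ∧
      ∃ v : PolVars n b, v.1 = i ∧ (v.2 : ℕ) = a i ∧ X v ∣ polMon K b c) ∧
    polarIdeal K b I ≤ phiIdeal K b a ∧
    phiIdeal K b a ∈ (polarIdeal K b I).minimalPrimes := by
  obtain ⟨-, -, hb⟩ := hI
  have hpow : ∀ i, monomial (Finsupp.single i (b i)) (1 : K) ∈ I := fun i => (hb i).2.1
  have hle := polarIdeal_le_phiIdeal hpow ha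
  refine ⟨fun c hc => exists_X_dvd_polMon hpow ha hc.1, hle,
    ⟨isPrime_ideal_span_X_image _, hle⟩, fun q hq hqφ => phiIdeal_le_of_isPrime hpow hq.1 hq.2 hqφ⟩
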